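/- Let (I_n)_{n≥0} be a nonzero ideal of 𝒵 and for each partition λ of n let L_λ ⊆ K[t] be the ideal with I_n = ⊕_{λ⊢n} L_λ·J_λ. Then I_0 ⊆ L_λ for every partition λ; in particular, every L_λ is nonzero, so each L_λ is generated by a unique monic polynomial g_λ, and g_λ divides g_∅ (the monic generator of I_0). -/

import Mathlib

open Polynomial

/-- `𝒵_n = K[t][Σ_n]`, the group algebra of the symmetric group on `n` letters
over the polynomial ring `K[t]`. -/
abbrev Zn (K : Type) [Field K] (n : ℕ) : Type :=
  MonoidAlgebra (Polynomial K) (Equiv.Perm (Fin n))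

/-- `KΣ_n`, the group algebra of the symmetric group over `K`. -/
abbrev GA (K : Type) [Field K] (n : ℕ) : Type :=
  MonoidAlgebra K (Equiv.Perm (Fin n))

/-- The basis element `[σ]` of `𝒵_n`. -/
noncomputable def zbasis {K : Type} [Field K] {n : ℕ} (σ : Equiv.Perm (Fin n)) : Zn K n :=
  MonoidAlgebra.single σ 1

/-- For `σ ∈ Σ_{n+1}`, the permutation `τ ∈ Σ_n` with `τ (σ⁻¹ n) = σ n` and
`τ k = σ k` for all other `k`; if `σ` fixes the last point this is the
restriction of `σ`. -/
def reduceLast {n : ℕ} (σ : Equiv.Perm (Fin (n + 1))) : Equiv.Perm (Fin n) :=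
  Equiv.removeNone (finSuccEquivLast.permCongr σ)

/-- The contraction `∂ : 𝒵_{n+1} → 𝒵_n`: the `K[t]`-linear map with
`∂[σ] = t·[σ']` if `σ` fixes the last point (`σ'` the restriction) and
`∂[σ] = [reduceLast σ]` otherwise. -/
noncomputable def contractZ {K : Type} [Field K] {n : ℕ} (a : Zn K (n + 1)) : Zn K n :=
  Finsupp.sum a.coeff fun σ f =>
    MonoidAlgebra.single (reduceLast σ)
      ((if σ (Fin.last n) = Fin.last n then (X : Polynomial K) else 1) * f)

/-- `σ ⊕ τ ∈ Σ_{p+q}`: acts as `σ` on the first `p` letters and as the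
shift of `τ` on the last `q` letters. -/
def permShift {p q : ℕ} (σ : Equiv.Perm (Fin p)) (τ : Equiv.Perm (Fin q)) :
    Equiv.Perm (Fin (p + q)) :=
  finSumFinEquiv.permCongr (Equiv.sumCongr σ τ)

/-- The tensor product `⊗ : 𝒵_p × 𝒵_q → 𝒵_{p+q}`, the `K[t]`-bilinear map with
`[σ] ⊗ [τ] = [σ ⊕ τ]`. -/
noncomputable def ztensor {K : Type} [Field K] {p q : ℕ} (a : Zn K p) (b : Zn K q) :
    Zn K (p + q) :=
  Finsupp.sum a.coeff fun σ f => Finsupp.sum b.coeff fun τ g =>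
    MonoidAlgebra.single (permShift σ τ) (f * g)

/-- An ideal of the wheeled PROP `𝒵`: a family `I_n ⊆ 𝒵_n` such that each `I_n` is a
two-sided ideal of the ring `K[t][Σ_n]`, closed under tensoring (on either side) with
arbitrary elements, and closed under contraction. -/
structure ZIdeal (K : Type) [Field K] where
  carrier : ∀ n : ℕ, Set (Zn K n)
  zero_mem : ∀ n : ℕ, (0 : Zn K n) ∈ carrier n
  add_mem : ∀ (n : ℕ) (a b : Zn K n), a ∈ carrier n → b ∈ carrier n → a + b ∈ carrier n
  neg_mem : ∀ (n : ℕ) (a : Zn K n), a ∈ carrier n → -a ∈ carrier n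
  mul_mem_left : ∀ (n : ℕ) (r a : Zn K n), a ∈ carrier n → r * a ∈ carrier n
  mul_mem_right : ∀ (n : ℕ) (r a : Zn K n), a ∈ carrier n → a * r ∈ carrier n
  tensor_mem_left : ∀ (p q : ℕ) (a : Zn K p) (b : Zn K q),
    a ∈ carrier p → ztensor a b ∈ carrier (p + q)
  tensor_mem_right : ∀ (p q : ℕ) (a : Zn K p) (b : Zn K q),
    a ∈ carrier p → ztensor b a ∈ carrier (q + p)
  contract_mem : ∀ (n : ℕ) (a : Zn K (n + 1)), a ∈ carrier (n + 1) → contractZ a ∈ carrier n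

/-- A nonzero ideal of `𝒵`. -/
def ZIdeal.Nonzero {K : Type} [Field K] (I : ZIdeal K) : Prop :=
  ∃ (d : ℕ) (a : Zn K d), a ∈ I.carrier d ∧ a ≠ 0

/-- A standard Young tableau of shape `μ` with entries in `Fin n`:
a bijection from the cells of `μ` to `Fin n` (thought of as the entries `1,…,n`)
that increases along rows and columns.  (Coordinates of cells are 0-indexed,
in matrix convention: `(i, j)` is row `i`, column `j`.) -/
structure SYT (μ : YoungDiagram) (n : ℕ) where
  toEquiv : {c : ℕ × ℕ // c ∈ μ} ≃ Fin n
  row_lt : ∀ c d : {c : ℕ × ℕ // c ∈ μ},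
    c.1.1 = d.1.1 → c.1.2 < d.1.2 → toEquiv c < toEquiv d
  col_lt : ∀ c d : {c : ℕ × ℕ // c ∈ μ},
    c.1.2 = d.1.2 → c.1.1 < d.1.1 → toEquiv c < toEquiv d

/-- `σ` belongs to the row stabilizer `R(T)` of the tableau `T`. -/
def isRowStab {μ : YoungDiagram} {n : ℕ} (T : SYT μ n) (σ : Equiv.Perm (Fin n)) : Prop :=
  ∀ k : Fin n, (T.toEquiv.symm (σ k)).1.1 = (T.toEquiv.symm k).1.1

/-- `σ` belongs to the column stabilizer `C(T)` of the tableau `T`. -/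
def isColStab {μ : YoungDiagram} {n : ℕ} (T : SYT μ n) (σ : Equiv.Perm (Fin n)) : Prop :=
  ∀ k : Fin n, (T.toEquiv.symm (σ k)).1.2 = (T.toEquiv.symm k).1.2

open Classical in
/-- The Young symmetrizer `y_T = Σ_{σ ∈ R(T), π ∈ C(T)} sgn(π)·[π σ]`, with
coefficients in a commutative ring `R`. -/
noncomputable def ySym (R : Type) [CommRing R] {μ : YoungDiagram} {n : ℕ} (T : SYT μ n) :
    MonoidAlgebra R (Equiv.Perm (Fin n)) :=
  ∑ σ : Equiv.Perm (Fin n), ∑ π : Equiv.Perm (Fin n),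
    if isRowStab T σ ∧ isColStab T π then
      MonoidAlgebra.single (π * σ) (((Equiv.Perm.sign π : ℤ) : R))
    else 0

/-- The two-sided span `A·S·A` of a subset `S` of a `K`-algebra `A`,
as a `K`-subspace. -/
noncomputable def twoSidedSpan {K : Type} [Field K] {A : Type} [Ring A] [Algebra K A]
    (S : Set A) : Submodule K A :=
  Submodule.span K {x | ∃ a b : A, ∃ s ∈ S, x = a * s * b}

/-- The simple two-sided ideal `J_λ = KΣ_n · y_T · KΣ_n ⊆ KΣ_n` attached to a
partition (Young diagram) `μ`; it does not depend on the choice of a standard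
Young tableau `T` of shape `μ`, so we take the supremum over all of them. -/
noncomputable def Jideal (K : Type) [Field K] (n : ℕ) (μ : YoungDiagram) :
    Submodule K (GA K n) :=
  ⨆ T : SYT μ n, twoSidedSpan {ySym K T}

/-- The embedding `KΣ_n → K[t][Σ_n]` (coefficientwise `K → K[t]`). -/
noncomputable def embZ (K : Type) [Field K] (n : ℕ) : GA K n →ₗ[K] Zn K n :=
  (MonoidAlgebra.coeffLinearEquiv K).symm.toLinearMap ∘ₗ
    Finsupp.mapRange.linearMap (Algebra.linearMap K (Polynomial K)) ∘ₗ
    (MonoidAlgebra.coeffLinearEquiv K).toLinearMap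

/-- `J_λ`, regarded inside `𝒵_n = K[t][Σ_n]` (as a `K`-subspace). -/
noncomputable def JZ (K : Type) [Field K] (n : ℕ) (μ : YoungDiagram) :
    Submodule K (Zn K n) :=
  Submodule.map (embZ K n) (Jideal K n μ)

/-- `L·J_λ ⊆ 𝒵_n`: the `K`-span of products `f • x` with `f ∈ L ⊆ K[t]`, `x ∈ J_λ`. -/
noncomputable def LJ (K : Type) [Field K] (n : ℕ) (L : Ideal (Polynomial K))
    (μ : YoungDiagram) : Submodule K (Zn K n) :=
  Submodule.span K {x | ∃ f ∈ L, ∃ y ∈ JZ K n μ, x = f • y}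

/-- The partitions of `n`, as Young diagrams with `n` cells. -/
def Par (n : ℕ) : Type := {μ : YoungDiagram // μ.card = n}

/-- `I_n` decomposes as the direct sum `⊕_{λ ⊢ n} L_λ·J_λ`. -/
def IsDecomp (K : Type) [Field K] (n : ℕ) (S : Set (Zn K n))
    (L : Par n → Ideal (Polynomial K)) : Prop :=
  S = ↑(⨆ μ : Par n, LJ K n (L μ) μ.1) ∧ iSupIndep fun μ : Par n => LJ K n (L μ) μ.1

/-- For a monic `f ∈ K[t]` and a finite set `C` of boxes, the polynomial
`g_λ = f · ∏_{(i,j) ∈ C, (i,j) ∉ λ} (t + j − i)`. -/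
noncomputable def gOf (K : Type) [Field K] (f : Polynomial K) (C : Finset (ℕ × ℕ))
    (μ : YoungDiagram) : Polynomial K :=
  f * ∏ c ∈ C.filter (fun c => c ∉ μ), ((X : Polynomial K) + (c.2 : Polynomial K) - (c.1 : Polynomial K))

/-- The `n`-th piece of the ideal `I(f, C)` of `𝒵`:
`I(f,C)_n = ⊕_{λ ⊢ n} (g_λ)·J_λ`. -/
noncomputable def IfcCarrier (K : Type) [Field K] (f : Polynomial K) (C : Finset (ℕ × ℕ))
    (n : ℕ) : Set (Zn K n) :=
  ↑(⨆ μ : Par n, LJ K n (Ideal.span {gOf K f C μ.1}) μ.1)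

noncomputable section AuxProof
open Equiv Finset

variable {K : Type} [Field K] {n : ℕ}

/-- sign of a permutation, in a commutative ring -/
def sg (R : Type) [CommRing R] {n : ℕ} (π : Equiv.Perm (Fin n)) : R :=
  ((Equiv.Perm.sign π : ℤ) : R)

lemma sg_one (R : Type) [CommRing R] : sg R (1 : Equiv.Perm (Fin n)) = 1 := by simp [sg]

lemma sg_mul (R : Type) [CommRing R] (π ρ : Equiv.Perm (Fin n)) :
    sg R (π * ρ) = sg R π * sg R ρ := by
  simp only [sg, map_mul, Units.val_mul, Int.cast_mul]

lemma sg_inv (R : Type) [CommRing R] (π : Equiv.Perm (Fin n)) : sg R π⁻¹ = sg R π := by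
  simp [sg]

lemma sg_sq (R : Type) [CommRing R] (π : Equiv.Perm (Fin n)) : sg R π * sg R π = 1 := by
  rw [← sg_mul]
  rcases Int.units_eq_one_or (Equiv.Perm.sign π) with h | h <;> simp [sg, h]

lemma sg_swap (R : Type) [CommRing R] {k₁ k₂ : Fin n} (h : k₁ ≠ k₂) :
    sg R (Equiv.swap k₁ k₂) = -1 := by
  simp [sg, Equiv.Perm.sign_swap h]

section Stab

variable {μ : YoungDiagram} (T : SYT μ n)

lemma isRowStab_one : isRowStab T 1 := fun _ => rfl

lemma isColStab_one : isColStab T 1 := fun _ => rfl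

lemma isRowStab_mul {σ τ : Equiv.Perm (Fin n)} (hσ : isRowStab T σ) (hτ : isRowStab T τ) :
    isRowStab T (σ * τ) := fun k => by
  have h1 := hσ (τ k)
  have h2 := hτ k
  simpa [Equiv.Perm.mul_apply] using h1.trans h2

lemma isColStab_mul {σ τ : Equiv.Perm (Fin n)} (hσ : isColStab T σ) (hτ : isColStab T τ) :
    isColStab T (σ * τ) := fun k => by
  have h1 := hσ (τ k)
  have h2 := hτ k
  simpa [Equiv.Perm.mul_apply] using h1.trans h2

lemma isRowStab_inv {σ : Equiv.Perm (Fin n)} (hσ : isRowStab T σ) : isRowStab T σ⁻¹ := fun k => by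
  have := hσ (σ⁻¹ k)
  simpa using this.symm

lemma isColStab_inv {σ : Equiv.Perm (Fin n)} (hσ : isColStab T σ) : isColStab T σ⁻¹ := fun k => by
  have := hσ (σ⁻¹ k)
  simpa using this.symm

lemma eq_one_of_rowStab_colStab {σ : Equiv.Perm (Fin n)} (hr : isRowStab T σ)
    (hc : isColStab T σ) : σ = 1 := by
  ext k
  have : T.toEquiv.symm (σ k) = T.toEquiv.symm k :=
    Subtype.ext (Prod.ext (hr k) (hc k))
  exact congrArg Fin.val (by simpa using T.toEquiv.symm.injective this)

lemma isColStab_swap {k₁ k₂ : Fin n}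
    (h : (T.toEquiv.symm k₁).1.2 = (T.toEquiv.symm k₂).1.2) :
    isColStab T (Equiv.swap k₁ k₂) := by
  intro k
  rcases eq_or_ne k k₁ with rfl | h1
  · rw [Equiv.swap_apply_left]; exact h.symm
  rcases eq_or_ne k k₂ with rfl | h2
  · rw [Equiv.swap_apply_right]; exact h
  · rw [Equiv.swap_apply_of_ne_of_ne h1 h2]

lemma isRowStab_swap {k₁ k₂ : Fin n}
    (h : (T.toEquiv.symm k₁).1.1 = (T.toEquiv.symm k₂).1.1) :
    isRowStab T (Equiv.swap k₁ k₂) := by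
  intro k
  rcases eq_or_ne k k₁ with rfl | h1
  · rw [Equiv.swap_apply_left]; exact h.symm
  rcases eq_or_ne k k₂ with rfl | h2
  · rw [Equiv.swap_apply_right]; exact h
  · rw [Equiv.swap_apply_of_ne_of_ne h1 h2]

end Stab

section AB

open Classical in
/-- the row symmetrizer `a_T` -/
def rowSym (R : Type) [CommRing R] {μ : YoungDiagram} (T : SYT μ n) :
    MonoidAlgebra R (Equiv.Perm (Fin n)) :=
  ∑ σ : Equiv.Perm (Fin n), if isRowStab T σ then MonoidAlgebra.single σ 1 else 0

open Classical in
/-- the signed column symmetrizer `b_T` -/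
def colSym (R : Type) [CommRing R] {μ : YoungDiagram} (T : SYT μ n) :
    MonoidAlgebra R (Equiv.Perm (Fin n)) :=
  ∑ π : Equiv.Perm (Fin n), if isColStab T π then MonoidAlgebra.single π (sg R π) else 0

variable (R : Type) [CommRing R] {μ : YoungDiagram} (T : SYT μ n)

open Classical in
lemma ySym_eq : ySym R T = colSym R T * rowSym R T := by
  rw [ySym, colSym, rowSym, Finset.sum_mul_sum]
  rw [Finset.sum_comm]
  refine Finset.sum_congr rfl fun σ _ => Finset.sum_congr rfl fun π _ => ?_
  split_ifs with h1 h2 h2 <;>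
    simp_all [MonoidAlgebra.single_mul_single, sg]

open Classical in
lemma rowSym_absorb_left {s : Equiv.Perm (Fin n)} (hs : isRowStab T s) :
    MonoidAlgebra.single s (1 : R) * rowSym R T = rowSym R T := by
  rw [rowSym, Finset.mul_sum]
  refine Fintype.sum_equiv (Equiv.mulLeft s) _ _ fun σ => ?_
  show (MonoidAlgebra.single s 1 * if isRowStab T σ then MonoidAlgebra.single σ 1 else 0) =
    if isRowStab T (s * σ) then MonoidAlgebra.single (s * σ) (1 : R) else 0
  rcases Classical.em (isRowStab T σ) with h | h
  · rw [if_pos h, if_pos (isRowStab_mul T hs h),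
      MonoidAlgebra.single_mul_single, one_mul]
  · rw [if_neg h, mul_zero, if_neg]
    intro hc
    have := isRowStab_mul T (isRowStab_inv T hs) hc
    exact h (by simpa [← mul_assoc] using this)

open Classical in
lemma colSym_absorb_right {c : Equiv.Perm (Fin n)} (hc : isColStab T c) :
    colSym R T * MonoidAlgebra.single c (1 : R) = sg R c • colSym R T := by
  rw [colSym, Finset.sum_mul, Finset.smul_sum]
  refine Fintype.sum_equiv (Equiv.mulRight c) _ _ fun π => ?_
  show ((if isColStab T π then MonoidAlgebra.single π (sg R π) else 0) * MonoidAlgebra.single c 1) =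
    sg R c • if isColStab T (π * c) then MonoidAlgebra.single (π * c) (sg R (π * c)) else 0
  rcases Classical.em (isColStab T π) with h | h
  · rw [if_pos h, if_pos (isColStab_mul T h hc),
      MonoidAlgebra.single_mul_single, mul_one, MonoidAlgebra.smul_single]
    congr 1
    rw [sg_mul, smul_eq_mul, ← mul_assoc, mul_comm (sg R c) (sg R π), mul_assoc, sg_sq, mul_one]
  · rw [if_neg h, zero_mul, if_neg, smul_zero]
    intro hcc
    have := isColStab_mul T hcc (isColStab_inv T hc)
    exact h (by simpa [mul_assoc] using this)

end AB
end AuxProof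
noncomputable section AuxProof2
open Equiv Finset

variable {K : Type} [Field K] {n : ℕ}

/-- number of cells in the first `k` rows -/
def cnt (γ : YoungDiagram) (k : ℕ) : ℕ := (γ.cells.filter (fun c => c.1 < k)).card

/-- dominance-type order via partial row sums -/
def Dom (α β : YoungDiagram) : Prop := ∀ k, cnt α k ≤ cnt β k

lemma cnt_succ (γ : YoungDiagram) (i : ℕ) : cnt γ (i + 1) = cnt γ i + γ.rowLen i := by
  rw [γ.rowLen_eq_card, cnt, cnt]
  have h : γ.cells.filter (fun c => c.1 < i + 1)
      = γ.cells.filter (fun c => c.1 < i) ∪ γ.row i := by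
    rw [YoungDiagram.row, ← Finset.filter_or]
    exact Finset.filter_congr (fun c _ => by constructor <;> (intro h; omega))
  rw [h, Finset.card_union_of_disjoint]
  rw [Finset.disjoint_left]
  intro c hc hc'
  rw [Finset.mem_filter] at hc
  rw [YoungDiagram.mem_row_iff] at hc'
  omega

lemma dom_antisymm {α β : YoungDiagram} (h1 : Dom α β) (h2 : Dom β α) : α = β := by
  have hc : ∀ k, cnt α k = cnt β k := fun k => le_antisymm (h1 k) (h2 k)
  have hr : ∀ i, α.rowLen i = β.rowLen i := by
    intro i
    have e1 := cnt_succ α i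
    have e2 := cnt_succ β i
    have h3 := hc i; have h4 := hc (i + 1)
    omega
  apply YoungDiagram.ext
  apply Finset.ext
  rintro ⟨i, j⟩
  rw [YoungDiagram.mem_cells, YoungDiagram.mem_cells,
    YoungDiagram.mem_iff_lt_rowLen, YoungDiagram.mem_iff_lt_rowLen, hr i]

lemma dom_of_no_pair {α β : YoungDiagram} (Tr : SYT α n) (Tc : SYT β n)
    (g₀ : Equiv.Perm (Fin n))
    (hnp : ∀ k₁ k₂ : Fin n, k₁ ≠ k₂ →
      (Tc.toEquiv.symm k₁).1.2 = (Tc.toEquiv.symm k₂).1.2 →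
      (Tr.toEquiv.symm (g₀⁻¹ k₁)).1.1 ≠ (Tr.toEquiv.symm (g₀⁻¹ k₂)).1.1) :
    Dom α β := by
  classical
  set E : ℕ × ℕ → ℕ × ℕ := fun c =>
    if h : c ∈ α then ((Tc.toEquiv.symm (g₀ (Tr.toEquiv ⟨c, h⟩))) : {c : ℕ × ℕ // c ∈ β}).1
    else c with hE
  have hEval : ∀ c (h : c ∈ α), E c = (Tc.toEquiv.symm (g₀ (Tr.toEquiv ⟨c, h⟩))).1 := by
    intro c h; rw [hE]; simp only [dif_pos h]
  have hEmem : ∀ c, c ∈ α → E c ∈ β := by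
    intro c h; rw [hEval c h]; exact (Tc.toEquiv.symm _).2
  have hEinj : ∀ c d, c ∈ α → d ∈ α → E c = E d → c = d := by
    intro c d hc hd h
    rw [hEval c hc, hEval d hd] at h
    have h1 := Tc.toEquiv.symm.injective (Subtype.ext h)
    have h2 := g₀.injective h1
    have h3 := Tr.toEquiv.injective h2
    exact congrArg Subtype.val h3
  have hP : ∀ c d, c ∈ α → d ∈ α → (E c).2 = (E d).2 → c.1 = d.1 → c = d := by
    intro c d hc hd hcol hrow
    by_contra hne
    set k₁ := g₀ (Tr.toEquiv ⟨c, hc⟩) with hk₁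
    set k₂ := g₀ (Tr.toEquiv ⟨d, hd⟩) with hk₂
    have hkne : k₁ ≠ k₂ := by
      intro h
      apply hne
      have h1 := g₀.injective h
      have h2 := Tr.toEquiv.injective h1
      exact congrArg Subtype.val h2
    have hc1 : (Tc.toEquiv.symm k₁).1.2 = (Tc.toEquiv.symm k₂).1.2 := by
      rw [← hEval c hc, ← hEval d hd]; exact hcol
    have hr1 : (Tr.toEquiv.symm (g₀⁻¹ k₁)).1.1 = (Tr.toEquiv.symm (g₀⁻¹ k₂)).1.1 := by
      rw [hk₁, hk₂, Equiv.Perm.inv_eq_iff_eq.mpr rfl, Equiv.Perm.inv_eq_iff_eq.mpr rfl,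
        Equiv.symm_apply_apply, Equiv.symm_apply_apply]
      exact hrow
    exact hnp k₁ k₂ hkne hc1 hr1
  intro k
  rw [cnt, cnt]
  set A := α.cells.filter (fun c => c.1 < k) with hA
  set B := β.cells.filter (fun c => c.1 < k) with hB
  have hAα : ∀ c, c ∈ A → c ∈ α := by
    intro c hc
    exact (YoungDiagram.mem_cells _).mp (Finset.mem_filter.mp hc).1
  have hAk : ∀ c, c ∈ A → c.1 < k := fun c hc => (Finset.mem_filter.mp hc).2
  set Fb : ℕ × ℕ → Finset (ℕ × ℕ) := fun c => A.filter (fun c' => (E c').2 = (E c).2) with hFb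
  -- fiber bounds
  have hFk : ∀ c, (Fb c).card ≤ k := by
    intro c
    have : (Finset.range k).card = k := Finset.card_range k
    rw [← this]
    apply Finset.card_le_card_of_injOn (fun c' => c'.1)
    · intro x hx
      rw [Finset.mem_coe, Finset.mem_range]
      exact hAk x (Finset.mem_filter.mp hx).1
    · intro x hx y hy hxy
      rw [Finset.mem_coe, Finset.mem_filter] at hx hy
      exact hP x y (hAα x hx.1) (hAα y hy.1) (hx.2.trans hy.2.symm) hxy
  have hFcol : ∀ c, (Fb c).card ≤ β.colLen ((E c).2) := by
    intro c
    rw [YoungDiagram.colLen_eq_card]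
    apply Finset.card_le_card_of_injOn E
    · intro x hx
      obtain ⟨hxA, hxE⟩ := Finset.mem_filter.mp hx
      rw [Finset.mem_coe, YoungDiagram.mem_col_iff]
      exact ⟨hEmem x (hAα x hxA), hxE⟩
    · intro x hx y hy hxy
      rw [Finset.mem_coe, Finset.mem_filter] at hx hy
      exact hEinj x y (hAα x hx.1) (hAα y hy.1) hxy
  have hρlt : ∀ c, c ∈ A → ((Fb c).filter (fun c' => c'.1 < c.1)).card < (Fb c).card := by
    intro c hc
    apply Finset.card_lt_card
    rw [Finset.ssubset_iff_of_subset (Finset.filter_subset _ _)]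
    refine ⟨c, Finset.mem_filter.mpr ⟨hc, rfl⟩, ?_⟩
    intro hcf
    exact absurd (Finset.mem_filter.mp hcf).2 (lt_irrefl c.1)
  -- the key strict monotonicity of ranks
  have hkey : ∀ c d, c ∈ A → d ∈ A → (E c).2 = (E d).2 → c.1 < d.1 →
      ((Fb c).filter (fun c' => c'.1 < c.1)).card < ((Fb d).filter (fun c' => c'.1 < d.1)).card := by
    intro c d hcA hdA hj hlt
    have hFeq : Fb c = Fb d := by
      rw [hFb]; simp only; rw [hj]
    rw [hFeq]
    apply Finset.card_lt_card
    have hsub : (Fb d).filter (fun c' => c'.1 < c.1) ⊆ (Fb d).filter (fun c' => c'.1 < d.1) :=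
      Finset.monotone_filter_right _ (fun c' _ (hc' : c'.1 < c.1) => lt_trans hc' hlt)
    rw [Finset.ssubset_iff_of_subset hsub]
    refine ⟨c, Finset.mem_filter.mpr ⟨Finset.mem_filter.mpr ⟨hcA, hj⟩, hlt⟩, ?_⟩
    intro hcf
    exact absurd (Finset.mem_filter.mp hcf).2 (lt_irrefl c.1)
  apply Finset.card_le_card_of_injOn
    (fun c => (((Fb c).filter (fun c' => c'.1 < c.1)).card, (E c).2))
  · intro c hc
    rw [hB, Finset.mem_coe, Finset.mem_filter]
    constructor
    · rw [YoungDiagram.mem_cells, YoungDiagram.mem_iff_lt_colLen]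
      exact lt_of_lt_of_le (hρlt c hc) (hFcol c)
    · exact lt_of_lt_of_le (hρlt c hc) (hFk c)
  · intro c hc d hd h
    simp only [Finset.mem_coe] at hc hd
    simp only [Prod.mk.injEq] at h
    obtain ⟨hρ, hj⟩ := h
    have hrow : c.1 = d.1 := by
      rcases lt_trichotomy c.1 d.1 with hlt | heq | hgt
      · exact absurd hρ (Nat.ne_of_lt (hkey c d hc hd hj hlt))
      · exact heq
      · exact absurd hρ.symm (Nat.ne_of_lt (hkey d c hd hc hj.symm hgt))
    exact hP c d (hAα c hc) (hAα d hd) hj hrow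
noncomputable section AuxProof3
open Equiv Finset

variable {K : Type} [Field K] [CharZero K] {n : ℕ}

lemma colSym_mul_single_mul_rowSym {α β : YoungDiagram} (Tc : SYT β n) (Tr : SYT α n)
    (hdom : ¬ Dom α β) (g₀ : Equiv.Perm (Fin n)) :
    colSym K Tc * MonoidAlgebra.single g₀ (1 : K) * rowSym K Tr = 0 := by
  have hex : ∃ k₁ k₂ : Fin n, k₁ ≠ k₂ ∧ (Tc.toEquiv.symm k₁).1.2 = (Tc.toEquiv.symm k₂).1.2 ∧
      (Tr.toEquiv.symm (g₀⁻¹ k₁)).1.1 = (Tr.toEquiv.symm (g₀⁻¹ k₂)).1.1 := by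
    by_contra hno
    push_neg at hno
    exact hdom (dom_of_no_pair Tr Tc g₀ fun k₁ k₂ h1 h2 => hno k₁ k₂ h1 h2)
  obtain ⟨k₁, k₂, hne, hcol, hrow⟩ := hex
  set t := Equiv.swap k₁ k₂ with ht
  set s := g₀⁻¹ * t * g₀ with hs
  have hsswap : Equiv.swap (g₀⁻¹ k₁) (g₀⁻¹ k₂) = s := by
    rw [hs, ht, Equiv.swap_apply_apply, inv_inv]
  have hsR : isRowStab Tr s := hsswap ▸ isRowStab_swap Tr hrow
  have htC : isColStab Tc t := isColStab_swap Tc hcol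
  have htg : t * g₀ = g₀ * s := by rw [hs]; group
  have ht2 : t * (t * g₀) = g₀ := by rw [← mul_assoc, ht, Equiv.swap_mul_self, one_mul]
  have e1 : MonoidAlgebra.single g₀ (1 : K) = MonoidAlgebra.single t 1 *
      (MonoidAlgebra.single g₀ 1 * MonoidAlgebra.single s 1) := by
    rw [MonoidAlgebra.single_mul_single, MonoidAlgebra.single_mul_single, one_mul, one_mul,
      ← htg, ht2]
  set x := colSym K Tc * MonoidAlgebra.single g₀ (1 : K) * rowSym K Tr with hx
  have hneg : x = -x := by
    calc x = (colSym K Tc * MonoidAlgebra.single t 1) *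
        (MonoidAlgebra.single g₀ 1 * (MonoidAlgebra.single s 1 * rowSym K Tr)) := by
          rw [hx]
          conv_lhs => rw [e1]
          noncomm_ring
    _ = (sg K t • colSym K Tc) * (MonoidAlgebra.single g₀ 1 * rowSym K Tr) := by
          rw [colSym_absorb_right K Tc htC, rowSym_absorb_left K Tr hsR]
    _ = sg K t • x := by rw [smul_mul_assoc, ← mul_assoc, ← hx]
    _ = -x := by rw [sg_swap K hne, neg_smul, one_smul]
  have h2 : x + x = 0 := by
    nth_rewrite 1 [hneg]
    rw [neg_add_cancel]
  calc x = ((2 : K)⁻¹ * 2) • x := by norm_num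
  _ = (2 : K)⁻¹ • ((2 : K) • x) := mul_smul _ _ _
  _ = (2 : K)⁻¹ • (x + x) := by rw [two_smul]
  _ = 0 := by rw [h2, smul_zero]

lemma colSym_mul_mul_rowSym {α β : YoungDiagram} (Tc : SYT β n) (Tr : SYT α n)
    (hdom : ¬ Dom α β) (g : MonoidAlgebra K (Equiv.Perm (Fin n))) :
    colSym K Tc * g * rowSym K Tr = 0 := by
  have hg : g = g.coeff.sum (fun g₀ c => MonoidAlgebra.single g₀ c) := (MonoidAlgebra.sum_coeff_single g).symm
  rw [hg, Finsupp.sum, Finset.mul_sum, Finset.sum_mul]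
  apply Finset.sum_eq_zero
  intro g₀ _
  have h1 : MonoidAlgebra.single g₀ (g.coeff g₀) = (g.coeff g₀) • MonoidAlgebra.single g₀ (1 : K) := by
    rw [MonoidAlgebra.smul_single, smul_eq_mul, mul_one]
  rw [h1, mul_smul_comm, smul_mul_assoc, colSym_mul_single_mul_rowSym Tc Tr hdom g₀, smul_zero]
noncomputable section AuxProof4
open Equiv Finset

variable {K : Type} [Field K] {n : ℕ}

lemma mul_apply_one (R : Type) [CommRing R] (u v : MonoidAlgebra R (Equiv.Perm (Fin n))) :
    (u * v).coeff 1 = ∑ a : Equiv.Perm (Fin n), u.coeff a * v.coeff a⁻¹ := by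
  classical
  induction u using MonoidAlgebra.induction_linear with
  | zero => simp
  | add u1 u2 h1 h2 =>
      rw [add_mul, MonoidAlgebra.coeff_add, Finsupp.add_apply, h1, h2, ← Finset.sum_add_distrib]
      refine Finset.sum_congr rfl fun a _ => ?_
      rw [MonoidAlgebra.coeff_add, Finsupp.add_apply, add_mul]
  | single a c =>
      rw [MonoidAlgebra.coeff_single_mul_apply]
      simp only [MonoidAlgebra.coeff_single, Finsupp.single_apply, ite_mul, zero_mul]
      rw [Finset.sum_ite_eq (Finset.univ) a (fun ρ => c * v.coeff ρ⁻¹)]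
      simp

lemma co1_comm (u v : MonoidAlgebra K (Equiv.Perm (Fin n))) : (u * v).coeff 1 = (v * u).coeff 1 := by
  rw [mul_apply_one, mul_apply_one]
  refine Fintype.sum_equiv (Equiv.inv (Equiv.Perm (Fin n))) _ _ fun a => ?_
  simp [Equiv.inv_apply, mul_comm]

open Classical in
lemma prod_apply_rowCol (R : Type) [CommRing R] {μ : YoungDiagram} (T : SYT μ n)
    (ρ : Equiv.Perm (Fin n)) :
    (rowSym R T * colSym R T).coeff ρ = ∑ σ : Equiv.Perm (Fin n), ∑ π : Equiv.Perm (Fin n),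
      if isRowStab T σ ∧ isColStab T π ∧ σ * π = ρ then sg R π else 0 := by
  rw [rowSym, colSym, Finset.sum_mul_sum, MonoidAlgebra.coeff_sum, Finset.sum_apply']
  refine Finset.sum_congr rfl fun σ _ => ?_
  rw [MonoidAlgebra.coeff_sum, Finset.sum_apply']
  refine Finset.sum_congr rfl fun π _ => ?_
  split_ifs <;>
    simp_all [MonoidAlgebra.single_mul_single, MonoidAlgebra.coeff_single, Finsupp.single_apply, eq_comm]

open Classical in
lemma prod_apply_colRow (R : Type) [CommRing R] {μ : YoungDiagram} (T : SYT μ n)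
    (ρ : Equiv.Perm (Fin n)) :
    (colSym R T * rowSym R T).coeff ρ = ∑ σ : Equiv.Perm (Fin n), ∑ π : Equiv.Perm (Fin n),
      if isRowStab T σ ∧ isColStab T π ∧ π * σ = ρ then sg R π else 0 := by
  rw [colSym, rowSym, Finset.sum_mul_sum, MonoidAlgebra.coeff_sum, Finset.sum_apply', Finset.sum_comm]
  refine Finset.sum_congr rfl fun σ _ => ?_
  rw [MonoidAlgebra.coeff_sum, Finset.sum_apply']
  refine Finset.sum_congr rfl fun π _ => ?_
  split_ifs <;>
    simp_all [MonoidAlgebra.single_mul_single, MonoidAlgebra.coeff_single, Finsupp.single_apply, eq_comm, and_comm]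

open Classical in
lemma rowCol_apply_inv (R : Type) [CommRing R] {μ : YoungDiagram} (T : SYT μ n)
    (ρ : Equiv.Perm (Fin n)) :
    (rowSym R T * colSym R T).coeff ρ⁻¹ = (colSym R T * rowSym R T).coeff ρ := by
  rw [prod_apply_rowCol, prod_apply_colRow]
  rw [← Finset.sum_product', ← Finset.sum_product', Finset.univ_product_univ]
  refine Fintype.sum_equiv
    (Equiv.prodCongr (Equiv.inv (Equiv.Perm (Fin n))) (Equiv.inv (Equiv.Perm (Fin n)))) _ _
    fun p => ?_
  obtain ⟨σ, π⟩ := p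
  simp only [Equiv.prodCongr_apply, Equiv.inv_apply, Prod.map]
  rw [show sg R π⁻¹ = sg R π from sg_inv R π]
  refine if_congr ⟨?_, ?_⟩ rfl rfl
  · rintro ⟨h1, h2, h3⟩
    refine ⟨isRowStab_inv T h1, isColStab_inv T h2, ?_⟩
    rw [← mul_inv_rev, h3, inv_inv]
  · rintro ⟨h1, h2, h3⟩
    have h1' := isRowStab_inv T h1
    have h2' := isColStab_inv T h2
    rw [inv_inv] at h1' h2'
    refine ⟨h1', h2', ?_⟩
    have : (π⁻¹ * σ⁻¹)⁻¹ = ρ⁻¹ := by rw [h3]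
    rwa [mul_inv_rev, inv_inv, inv_inv] at this

open Classical in
/-- integer coefficients of the Young symmetrizer -/
def mcf {μ : YoungDiagram} (T : SYT μ n) (ρ : Equiv.Perm (Fin n)) : ℤ :=
  ∑ σ : Equiv.Perm (Fin n), ∑ π : Equiv.Perm (Fin n),
    if isRowStab T σ ∧ isColStab T π ∧ π * σ = ρ then sg ℤ π else 0

open Classical in
lemma ySym_apply_eq_mcf (R : Type) [CommRing R] {μ : YoungDiagram} (T : SYT μ n)
    (ρ : Equiv.Perm (Fin n)) : (ySym R T).coeff ρ = ((mcf T ρ : ℤ) : R) := by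
  rw [ySym_eq, prod_apply_colRow, mcf, Int.cast_sum]
  refine Finset.sum_congr rfl fun σ _ => ?_
  rw [Int.cast_sum]
  refine Finset.sum_congr rfl fun π _ => ?_
  split_ifs <;> simp [sg]

open Classical in
lemma mcf_one {μ : YoungDiagram} (T : SYT μ n) : mcf T 1 = 1 := by
  rw [mcf]
  have h : ∀ σ π : Equiv.Perm (Fin n),
      (isRowStab T σ ∧ isColStab T π ∧ π * σ = 1) ↔ (σ = 1 ∧ π = 1) := by
    intro σ π
    constructor
    · rintro ⟨h1, h2, h3⟩
      have hσ : σ = π⁻¹ := eq_inv_of_mul_eq_one_right h3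
      have hπR : isRowStab T π := by
        have := isRowStab_inv T h1
        rwa [hσ, inv_inv] at this
      have hπ1 : π = 1 := eq_one_of_rowStab_colStab T hπR h2
      exact ⟨by rw [hσ, hπ1, inv_one], hπ1⟩
    · rintro ⟨rfl, rfl⟩
      exact ⟨isRowStab_one T, isColStab_one T, one_mul 1⟩
  have h2 : (∑ σ : Equiv.Perm (Fin n), ∑ π : Equiv.Perm (Fin n),
      if isRowStab T σ ∧ isColStab T π ∧ π * σ = 1 then sg ℤ π else 0)
      = ∑ σ : Equiv.Perm (Fin n), ∑ π : Equiv.Perm (Fin n),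
      if σ = 1 ∧ π = 1 then 1 else 0 := by
    refine Finset.sum_congr rfl fun σ _ => Finset.sum_congr rfl fun π _ => ?_
    by_cases hc : σ = 1 ∧ π = 1
    · rw [if_pos hc, if_pos ((h σ π).mpr hc), hc.2, sg_one]
    · rw [if_neg hc, if_neg (fun hcc => hc ((h σ π).mp hcc))]
  rw [h2]
  simp [ite_and]

open Classical in
lemma orth_pairing [CharZero K] {μlam μmu : YoungDiagram} (Tlam : SYT μlam n)
    (Tmu : SYT μmu n) (h : ¬ Dom μmu μlam ∨ ¬ Dom μlam μmu)
    (a b : MonoidAlgebra K (Equiv.Perm (Fin n))) :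
    (a * ySym K Tlam * b * (rowSym K Tmu * colSym K Tmu)).coeff 1 = 0 := by
  rw [ySym_eq]
  rcases h with h | h
  · have hz := colSym_mul_mul_rowSym Tlam Tmu h (rowSym K Tlam * b)
    have e : a * (colSym K Tlam * rowSym K Tlam) * b * (rowSym K Tmu * colSym K Tmu)
        = a * (colSym K Tlam * (rowSym K Tlam * b) * rowSym K Tmu) * colSym K Tmu := by
      noncomm_ring
    rw [e, hz, mul_zero, zero_mul, MonoidAlgebra.coeff_zero, Finsupp.zero_apply]
  · have hz := colSym_mul_mul_rowSym Tmu Tlam h (a * colSym K Tlam)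
    have e : a * (colSym K Tlam * rowSym K Tlam) * b * (rowSym K Tmu * colSym K Tmu)
        = (a * colSym K Tlam * rowSym K Tlam * b * rowSym K Tmu) * colSym K Tmu := by
      noncomm_ring
    rw [e, co1_comm]
    have e2 : colSym K Tmu * (a * colSym K Tlam * rowSym K Tlam * b * rowSym K Tmu)
        = (colSym K Tmu * (a * colSym K Tlam) * rowSym K Tlam) * (b * rowSym K Tmu) := by
      noncomm_ring
    rw [e2, hz, zero_mul, MonoidAlgebra.coeff_zero, Finsupp.zero_apply]

lemma self_pairing_ne_zero [CharZero K] {μ : YoungDiagram} (T : SYT μ n) :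
    (ySym K T * (rowSym K T * colSym K T)).coeff 1 ≠ 0 := by
  classical
  rw [mul_apply_one]
  have h1 : ∀ a : Equiv.Perm (Fin n),
      (ySym K T).coeff a * (rowSym K T * colSym K T).coeff a⁻¹ = ((mcf T a * mcf T a : ℤ) : K) := by
    intro a
    rw [rowCol_apply_inv, ← ySym_eq, ySym_apply_eq_mcf, Int.cast_mul]
  rw [Finset.sum_congr rfl fun a _ => h1 a, ← Int.cast_sum]
  rw [Int.cast_ne_zero]
  have hle : (1 : ℤ) ≤ ∑ a : Equiv.Perm (Fin n), mcf T a * mcf T a := by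
    have hs := Finset.single_le_sum (f := fun a : Equiv.Perm (Fin n) => mcf T a * mcf T a)
      (fun a _ => mul_self_nonneg _) (Finset.mem_univ 1)
    simp only [mcf_one] at hs
    simpa using hs
  omega
noncomputable section AuxProof5
open Equiv Finset Polynomial

variable {K : Type} [Field K] {n : ℕ}

lemma exists_SYT (μ : YoungDiagram) (h : μ.card = n) : Nonempty (SYT μ n) := by
  classical
  set B := μ.rowLen 0 + 1 with hB
  have hcell : ∀ c : ℕ × ℕ, c ∈ μ → c.2 < B := by
    intro c hc
    have h1 : ((c.1, c.2) : ℕ × ℕ) ∈ μ := by simpa using hc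
    have h2 := YoungDiagram.mem_iff_lt_rowLen.mp h1
    have h3 := μ.rowLen_anti 0 c.1 (Nat.zero_le _)
    omega
  set kf : ℕ × ℕ → ℕ := fun c => c.1 * B + c.2 with hkf
  have hkflt : ∀ c d : ℕ × ℕ, c ∈ μ →
      (c.1 < d.1 ∨ (c.1 = d.1 ∧ c.2 < d.2)) → kf c < kf d := by
    rintro c d hc (hl | ⟨he, hl⟩)
    · have h1 := hcell c hc
      have h2 : (c.1 + 1) * B ≤ d.1 * B := Nat.mul_le_mul_right B hl
      have h3 : c.1 * B + c.2 < (c.1 + 1) * B := by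
        have h4 : (c.1 + 1) * B = c.1 * B + B := by ring
        omega
      calc kf c < (c.1 + 1) * B := h3
      _ ≤ d.1 * B := h2
      _ ≤ kf d := Nat.le_add_right _ _
    · rw [hkf]
      simp only
      rw [he]
      omega
  have hinj : ∀ c d : ℕ × ℕ, c ∈ μ → d ∈ μ → kf c = kf d → c = d := by
    intro c d hc hd hcd
    have hrow : c.1 = d.1 := by
      rcases lt_trichotomy c.1 d.1 with hl | he | hl
      · exact absurd hcd (Nat.ne_of_lt (hkflt c d hc (Or.inl hl)))
      · exact he
      · exact absurd hcd.symm (Nat.ne_of_lt (hkflt d c hd (Or.inl hl)))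
    apply Prod.ext hrow
    rw [hkf] at hcd
    simp only at hcd
    rw [hrow] at hcd
    omega
  set s := μ.cells.image kf with hs
  have hscard : s.card = n := by
    rw [hs, Finset.card_image_of_injOn (fun c hc d hd hcd =>
      hinj c d ((YoungDiagram.mem_cells c).mp (Finset.mem_coe.mp hc))
        ((YoungDiagram.mem_cells d).mp (Finset.mem_coe.mp hd)) hcd)]
    exact h
  set oi := s.orderIsoOfFin hscard with hoi
  set kfs : {c : ℕ × ℕ // c ∈ μ} → {x : ℕ // x ∈ s} := fun c =>
    ⟨kf c.1, Finset.mem_image_of_mem kf ((YoungDiagram.mem_cells c.1).mpr c.2)⟩ with hkfs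
  have hbij : Function.Bijective kfs := by
    constructor
    · intro c d hcd
      exact Subtype.ext (hinj c.1 d.1 c.2 d.2 (congrArg Subtype.val hcd))
    · rintro ⟨x, hx⟩
      obtain ⟨c, hc, rfl⟩ := Finset.mem_image.mp hx
      exact ⟨⟨c, (YoungDiagram.mem_cells c).mp hc⟩, rfl⟩
  set eq1 := Equiv.ofBijective kfs hbij with heq1
  have hmain : ∀ c d : {c : ℕ × ℕ // c ∈ μ}, kf c.1 < kf d.1 →
      (eq1.trans oi.toEquiv.symm) c < (eq1.trans oi.toEquiv.symm) d := by
    intro c d hcd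
    have h1 : eq1 c < eq1 d := by
      rw [heq1]
      exact Subtype.mk_lt_mk.mpr hcd
    exact (OrderIso.lt_iff_lt oi.symm).mpr h1
  exact ⟨⟨eq1.trans oi.toEquiv.symm,
    fun c d h1 h2 => hmain c d (hkflt c.1 d.1 c.2 (Or.inr ⟨h1, h2⟩)),
    fun c d h1 h2 => hmain c d (hkflt c.1 d.1 c.2 (Or.inl h2))⟩⟩

lemma permShift_one_right (σ : Equiv.Perm (Fin n)) :
    permShift σ (1 : Equiv.Perm (Fin 0)) = σ := by
  apply Equiv.ext
  intro k
  rw [permShift, Equiv.permCongr_apply]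
  rcases hsym : finSumFinEquiv.symm k with a | b
  · have hk : k = Fin.castAdd 0 a := by
      have h1 := congrArg finSumFinEquiv hsym
      rw [Equiv.apply_symm_apply] at h1
      rw [h1, finSumFinEquiv_apply_left]
    have ha : Fin.castAdd 0 a = a := Fin.ext rfl
    have hσa : Fin.castAdd 0 (σ a) = σ a := Fin.ext rfl
    simp only [Equiv.sumCongr_apply, Sum.map_inl, finSumFinEquiv_apply_left]
    rw [hσa, hk, ha]
  · exact Fin.elim0 b

lemma ztensor_single_one (b : Zn K n) (f : Polynomial K) :
    ztensor b (MonoidAlgebra.single (1 : Equiv.Perm (Fin 0)) f) = f • b := by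
  classical
  rw [ztensor]
  have hinner : ∀ (σ : Equiv.Perm (Fin n)) (g : Polynomial K),
      (Finsupp.sum (MonoidAlgebra.single (1 : Equiv.Perm (Fin 0)) f).coeff
        fun τ p => MonoidAlgebra.single (permShift σ τ) (g * p))
      = MonoidAlgebra.single σ (g * f) := by
    intro σ g
    rw [MonoidAlgebra.coeff_single, Finsupp.sum_single_index (by simp)]
    rw [permShift_one_right]
  rw [Finsupp.sum_congr (g2 := fun σ g => MonoidAlgebra.single σ (g * f))
    (fun σ _ => hinner σ (b.coeff σ))]
  ext τ
  rw [MonoidAlgebra.coeff_finsuppSum, Finsupp.sum_apply, MonoidAlgebra.coeff_smul, Finsupp.smul_apply]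
  rw [Finsupp.sum]
  simp only [MonoidAlgebra.coeff_single, Finsupp.single_apply]
  rw [Finset.sum_ite_eq' b.coeff.support τ (fun σ => b.coeff σ * f)]
  by_cases hτ : τ ∈ b.coeff.support
  · rw [if_pos hτ, smul_eq_mul, mul_comm]
  · rw [if_neg hτ, Finsupp.notMem_support_iff.mp hτ, smul_zero]

lemma embZ_single (ρ : Equiv.Perm (Fin n)) (c : K) :
    embZ K n (MonoidAlgebra.single ρ c) = MonoidAlgebra.single ρ (Polynomial.C c) := by
  have h1 : embZ K n (MonoidAlgebra.single ρ c)
      = MonoidAlgebra.ofCoeff (Finsupp.mapRange (Algebra.linearMap K (Polynomial K)) (map_zero _)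
        (Finsupp.single ρ c)) := rfl
  rw [h1, Finsupp.mapRange_single]
  rw [Algebra.linearMap_apply, Polynomial.algebraMap_eq]
  rfl
noncomputable section AuxProof6
open Equiv Finset Polynomial

variable {K : Type} [Field K] {n : ℕ}

/-- the exponent of `t` produced by fully contracting `[σ]` -/
def eExp : {d : ℕ} → Equiv.Perm (Fin d) → ℕ
  | 0, _ => 0
  | _ + 1, σ => eExp (reduceLast σ) + (if σ (Fin.last _) = Fin.last _ then 1 else 0)

lemma reduceLast_apply_some (σ : Equiv.Perm (Fin (n + 1))) (y : Fin n)
    (h : σ (Fin.last n) = Fin.last n) :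
    some (reduceLast σ y) = finSuccEquivLast (σ (Fin.castSucc y)) := by
  have hnone : (finSuccEquivLast.permCongr σ) none = none := by
    rw [Equiv.permCongr_apply]
    simp [h]
  have hex : ∃ x', (finSuccEquivLast.permCongr σ) (some y) = some x' := by
    rcases ho : (finSuccEquivLast.permCongr σ) (some y) with _ | x'
    · exfalso
      have := (finSuccEquivLast.permCongr σ).injective (ho.trans hnone.symm)
      simp at this
    · exact ⟨x', rfl⟩
  have h1 := Equiv.removeNone_some _ hex
  rw [reduceLast]
  rw [h1, Equiv.permCongr_apply]
  simp

lemma reduceLast_one : reduceLast (1 : Equiv.Perm (Fin (n + 1))) = 1 := by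
  apply Equiv.ext
  intro y
  have h := reduceLast_apply_some (1 : Equiv.Perm (Fin (n + 1))) y (by simp)
  simp only [Equiv.Perm.one_apply] at h ⊢
  rw [finSuccEquivLast_castSucc] at h
  exact Option.some_injective _ h

lemma perm_eq_one_of_reduceLast (σ : Equiv.Perm (Fin (n + 1)))
    (h1 : σ (Fin.last n) = Fin.last n) (h2 : reduceLast σ = 1) : σ = 1 := by
  apply Equiv.ext
  intro x
  induction x using Fin.lastCases with
  | last => simpa using h1
  | cast y =>
      have h := reduceLast_apply_some σ y h1
      rw [h2] at h
      simp only [Equiv.Perm.one_apply] at h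
      have h3 : finSuccEquivLast (Fin.castSucc y) = finSuccEquivLast (σ (Fin.castSucc y)) := by
        rw [finSuccEquivLast_castSucc, h]
      simpa using (finSuccEquivLast.injective h3).symm

lemma eExp_le {d : ℕ} (σ : Equiv.Perm (Fin d)) : eExp σ ≤ d := by
  induction d with
  | zero => exact le_refl 0
  | succ d ih =>
      rw [eExp]
      have := ih (reduceLast σ)
      split_ifs <;> omega

lemma eExp_one (d : ℕ) : eExp (1 : Equiv.Perm (Fin d)) = d := by
  induction d with
  | zero => rfl
  | succ d ih =>
      rw [eExp, reduceLast_one, ih, if_pos (by simp)]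

lemma eq_one_of_eExp {d : ℕ} (σ : Equiv.Perm (Fin d)) (h : eExp σ = d) : σ = 1 := by
  induction d with
  | zero => exact Equiv.ext fun x => x.elim0
  | succ d ih =>
      rw [eExp] at h
      have hle := eExp_le (reduceLast σ)
      by_cases hfix : σ (Fin.last d) = Fin.last d
      · rw [if_pos hfix] at h
        exact perm_eq_one_of_reduceLast σ hfix (ih _ (by omega))
      · rw [if_neg hfix] at h
        omega

/-- the contraction, as a `K[t]`-linear map -/
def contractL (K : Type) [Field K] (n : ℕ) : Zn K (n + 1) →ₗ[Polynomial K] Zn K n :=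
  (Finsupp.lsum ℕ fun σ =>
    (MonoidAlgebra.lsingle (reduceLast σ)).comp
      (LinearMap.mulLeft (Polynomial K)
        (if σ (Fin.last n) = Fin.last n then (X : Polynomial K) else 1))).comp
    (MonoidAlgebra.coeffLinearEquiv (Polynomial K)).toLinearMap

lemma contractL_eq (a : Zn K (n + 1)) : contractL K n a = contractZ a := rfl

/-- full contraction -/
def fcL (K : Type) [Field K] : (d : ℕ) → (Zn K d →ₗ[Polynomial K] Zn K 0)
  | 0 => LinearMap.id
  | d + 1 => (fcL K d).comp (contractL K d)

lemma fcL_mem (I : ZIdeal K) : ∀ (d : ℕ) (a : Zn K d),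
    a ∈ I.carrier d → fcL K d a ∈ I.carrier 0 := by
  intro d
  induction d with
  | zero => intro a ha; exact ha
  | succ d ih =>
      intro a ha
      have h1 : contractZ a ∈ I.carrier d := I.contract_mem d a ha
      have h2 : fcL K (d + 1) a = fcL K d (contractZ a) := by
        rw [fcL, LinearMap.comp_apply, contractL_eq]
      rw [h2]
      exact ih _ h1

lemma fcL_single {d : ℕ} (σ : Equiv.Perm (Fin d)) (p : Polynomial K) :
    fcL K d (MonoidAlgebra.single σ p) = MonoidAlgebra.single 1 (X ^ eExp σ * p) := by
  induction d generalizing p with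
  | zero =>
      have hσ : σ = 1 := Equiv.ext fun x => x.elim0
      rw [hσ]
      show MonoidAlgebra.single 1 p = MonoidAlgebra.single 1 (X ^ (0 : ℕ) * p)
      rw [pow_zero, one_mul]
  | succ d ih =>
      have h2 : fcL K (d + 1) (MonoidAlgebra.single σ p)
          = fcL K d (contractL K d (MonoidAlgebra.single σ p)) := by
        rw [fcL, LinearMap.comp_apply]
      rw [h2]
      have h3 : contractL K d (MonoidAlgebra.single σ p)
          = MonoidAlgebra.single (reduceLast σ)
            ((if σ (Fin.last d) = Fin.last d then (X : Polynomial K) else 1) * p) := by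
        exact Finsupp.lsum_single ℕ _ σ p
      rw [h3, ih]
      rw [eExp]
      by_cases hfix : σ (Fin.last d) = Fin.last d
      · rw [if_pos hfix, if_pos hfix]
        congr 1
        rw [pow_add, pow_one]
        ring
      · rw [if_neg hfix, if_neg hfix]
        congr 1
        rw [add_zero]
        ring

lemma exists_nonzero_I0 (I : ZIdeal K) (h : I.Nonzero) :
    ∃ f : Polynomial K, f ≠ 0 ∧
      MonoidAlgebra.single (1 : Equiv.Perm (Fin 0)) f ∈ I.carrier 0 := by
  classical
  obtain ⟨d, a, ha, hne⟩ := h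
  have hsupp : a.coeff.support.Nonempty :=
    Finsupp.support_nonempty_iff.mpr (mt MonoidAlgebra.coeff_eq_zero.mp hne)
  obtain ⟨σ₀, hσ₀, hmax⟩ := Finset.exists_max_image a.coeff.support (fun ρ => (a.coeff ρ).natDegree) hsupp
  set b := a * MonoidAlgebra.single σ₀⁻¹ (1 : Polynomial K) with hb
  have hbI : b ∈ I.carrier d := I.mul_mem_right d _ a ha
  have hfc : fcL K d b ∈ I.carrier 0 := fcL_mem I d b hbI
  have hbsum : b = ∑ ρ ∈ a.coeff.support, MonoidAlgebra.single (ρ * σ₀⁻¹) (a.coeff ρ) := by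
    rw [hb]
    conv_lhs => rw [← MonoidAlgebra.sum_coeff_single a]
    rw [Finsupp.sum, Finset.sum_mul]
    refine Finset.sum_congr rfl fun ρ _ => ?_
    rw [MonoidAlgebra.single_mul_single, mul_one]
  set P : Polynomial K := ∑ ρ ∈ a.coeff.support, X ^ (eExp (ρ * σ₀⁻¹)) * (a.coeff ρ) with hP
  have hfcb : fcL K d b = MonoidAlgebra.single 1 P := by
    rw [hbsum, map_sum, hP]
    rw [Finset.sum_congr rfl fun ρ _ => fcL_single (ρ * σ₀⁻¹) (a.coeff ρ)]
    exact (map_sum (MonoidAlgebra.lsingle (1 : Equiv.Perm (Fin 0)) :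
      Polynomial K →ₗ[Polynomial K] Zn K 0) _ _).symm
  set D := d + (a.coeff σ₀).natDegree with hD
  have hcoeff : P.coeff D = (a.coeff σ₀).leadingCoeff := by
    rw [hP, Polynomial.finset_sum_coeff]
    rw [Finset.sum_eq_single σ₀]
    · rw [mul_inv_cancel, eExp_one, hD, add_comm d, Polynomial.coeff_X_pow_mul,
        Polynomial.coeff_natDegree]
    · intro ρ hρ hneρ
      apply Polynomial.coeff_eq_zero_of_natDegree_lt
      have h1 : (X ^ eExp (ρ * σ₀⁻¹) * a.coeff ρ).natDegree ≤ eExp (ρ * σ₀⁻¹) + (a.coeff ρ).natDegree := by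
        have := Polynomial.natDegree_mul_le (p := (X : Polynomial K) ^ eExp (ρ * σ₀⁻¹)) (q := a.coeff ρ)
        rwa [Polynomial.natDegree_X_pow] at this
      have h2 : eExp (ρ * σ₀⁻¹) ≤ d := eExp_le _
      have h3 : eExp (ρ * σ₀⁻¹) ≠ d := by
        intro hcon
        have := eq_one_of_eExp _ hcon
        have hρσ : ρ = σ₀ := by
          have h5 : ρ * σ₀⁻¹ * σ₀ = 1 * σ₀ := by rw [this]
          rwa [inv_mul_cancel_right, one_mul] at h5
        exact hneρ hρσ
      have h4 : (a.coeff ρ).natDegree ≤ (a.coeff σ₀).natDegree := hmax ρ hρ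
      rw [hD]
      omega
    · intro hcon
      exact absurd hσ₀ hcon
  have hPne : P ≠ 0 := by
    intro h0
    rw [h0, Polynomial.coeff_zero] at hcoeff
    exact (Polynomial.leadingCoeff_ne_zero.mpr (Finsupp.mem_support_iff.mp hσ₀)) hcoeff.symm
  refine ⟨P, hPne, ?_⟩
  rw [hfcb] at hfc
  exact hfc
noncomputable section AuxProof7
open Equiv Finset Polynomial

variable {K : Type} [Field K] {n : ℕ}

/-- the pairing functional `u ↦ (u * w) 1` -/
def coW (w : GA K n) : GA K n →ₗ[K] K :=
  (Finsupp.lapply (1 : Equiv.Perm (Fin n))).comp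
    ((MonoidAlgebra.coeffLinearEquiv K).toLinearMap.comp (LinearMap.mulRight K w))

lemma coW_apply (w u : GA K n) : coW w u = (u * w).coeff 1 := rfl

/-- extension of the pairing to `𝒵_n`, a `K[t]`-linear functional -/
def PhiMap (w : GA K n) : Zn K n →ₗ[Polynomial K] Polynomial K :=
  (Finsupp.lsum ℕ fun ρ =>
    LinearMap.toSpanSingleton (Polynomial K) (Polynomial K) (Polynomial.C (w.coeff ρ⁻¹))).comp
    (MonoidAlgebra.coeffLinearEquiv (Polynomial K)).toLinearMap

lemma PhiMap_single (w : GA K n) (ρ : Equiv.Perm (Fin n)) (p : Polynomial K) :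
    PhiMap w (MonoidAlgebra.single ρ p) = p * Polynomial.C (w.coeff ρ⁻¹) := by
  have h1 : PhiMap w (MonoidAlgebra.single ρ p)
      = LinearMap.toSpanSingleton (Polynomial K) (Polynomial K) (Polynomial.C (w.coeff ρ⁻¹)) p := by
    exact Finsupp.lsum_single ℕ _ ρ p
  rw [h1, LinearMap.toSpanSingleton_apply, smul_eq_mul]

lemma PhiMap_embZ (w : GA K n) (y : GA K n) :
    PhiMap w (embZ K n y) = Polynomial.C (coW w y) := by
  have h : ((PhiMap w).restrictScalars K).comp (embZ K n)
      = (Algebra.linearMap K (Polynomial K)).comp (coW w) := by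
    refine MonoidAlgebra.lhom_ext' fun ρ => LinearMap.ext fun c => ?_
    show PhiMap w (embZ K n (MonoidAlgebra.single ρ c))
        = algebraMap K (Polynomial K) (coW w (MonoidAlgebra.single ρ c))
    rw [embZ_single, PhiMap_single, Polynomial.algebraMap_eq]
    rw [coW_apply, MonoidAlgebra.coeff_single_mul_apply, mul_one, map_mul]
  exact LinearMap.congr_fun h y

lemma key1 [CharZero K] (I : ZIdeal K) (n : ℕ) (Ln : Par n → Ideal (Polynomial K))
    (hL : IsDecomp K n (I.carrier n) Ln) (μ : Par n) (f : Polynomial K)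
    (hf : MonoidAlgebra.single (1 : Equiv.Perm (Fin 0)) f ∈ I.carrier 0) : f ∈ Ln μ := by
  classical
  obtain ⟨T⟩ := exists_SYT μ.1 μ.2
  set w : GA K n := rowSym K T * colSym K T with hw
  set x : Zn K n := f • (embZ K n (ySym K T)) with hx
  have hxI : x ∈ I.carrier n := by
    have h1 := I.tensor_mem_right 0 n (MonoidAlgebra.single 1 f) (embZ K n (ySym K T)) hf
    rw [ztensor_single_one] at h1
    exact h1
  have hxSup : x ∈ (⨆ ν : Par n, LJ K n (Ln ν) ν.1) := by
    rw [hL.1] at hxI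
    exact hxI
  have hmem : ∀ z : Zn K n, z ∈ (⨆ ν : Par n, LJ K n (Ln ν) ν.1) → PhiMap w z ∈ Ln μ := by
    intro z hz
    refine Submodule.iSup_induction (motive := fun t => PhiMap w t ∈ Ln μ) _ hz ?_ (by simp) ?_
    · intro ν z hzν
      rw [LJ] at hzν
      refine Submodule.span_induction (p := fun t _ => PhiMap w t ∈ Ln μ) ?_ (by simp) ?_ ?_ hzν
      · rintro t ⟨f', hf', y, hy, rfl⟩
        obtain ⟨y', hy', rfl⟩ := Submodule.mem_map.mp hy
        rw [map_smul, PhiMap_embZ, smul_eq_mul]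
        by_cases hν : ν = μ
        · subst hν
          exact Ideal.mul_mem_right _ _ hf'
        · have hne : ν.1 ≠ μ.1 := fun hc => hν (Subtype.ext hc)
          have hdom : ¬ Dom μ.1 ν.1 ∨ ¬ Dom ν.1 μ.1 := by
            by_contra hcon
            push_neg at hcon
            exact hne (dom_antisymm hcon.2 hcon.1)
          have hker : Jideal K n ν.1 ≤ LinearMap.ker (coW w) := by
            rw [Jideal]
            refine iSup_le fun T' => ?_
            rw [twoSidedSpan, Submodule.span_le]
            rintro t ⟨a, b, s, hs, rfl⟩
            rw [Set.mem_singleton_iff] at hs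
            subst hs
            rw [SetLike.mem_coe, LinearMap.mem_ker, coW_apply, hw]
            exact orth_pairing T' T hdom a b
          have hcoW : coW w y' = 0 := LinearMap.mem_ker.mp (hker hy')
          rw [hcoW, map_zero, mul_zero]
          exact Ideal.zero_mem _
      · intro u v _ _ hu hv
        rw [map_add]
        exact Ideal.add_mem _ hu hv
      · intro a u _ hu
        rw [← algebraMap_smul (Polynomial K) a u, map_smul, smul_eq_mul]
        exact Ideal.mul_mem_left _ _ hu
    · intro u v hu hv
      rw [map_add]
      exact Ideal.add_mem _ hu hv
  have hPhix : PhiMap w x ∈ Ln μ := hmem x hxSup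
  rw [hx, map_smul, PhiMap_embZ, smul_eq_mul] at hPhix
  set c := coW w (ySym K T) with hc
  have hcne : c ≠ 0 := by
    rw [hc, coW_apply, hw]
    exact self_pairing_ne_zero T
  have hfinal : f = f * Polynomial.C c * Polynomial.C c⁻¹ := by
    rw [mul_assoc, ← Polynomial.C_mul, mul_inv_cancel₀ hcne, Polynomial.C_1, mul_one]
  rw [hfinal]
  exact Ideal.mul_mem_right _ _ hPhix

lemma exists_unique_monic (L : Ideal (Polynomial K)) (hne : L ≠ ⊥) :
    ∃! g : Polynomial K, g.Monic ∧ L = Ideal.span {g} := by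
  obtain ⟨g0, hg0⟩ := Submodule.IsPrincipal.principal L
  have hg0' : L = Ideal.span {g0} := hg0
  have hg0ne : g0 ≠ 0 := by
    rintro rfl
    exact hne (hg0'.trans (Ideal.span_singleton_eq_bot.mpr rfl))
  have hu : IsUnit (Polynomial.C (g0.leadingCoeff)⁻¹) :=
    Polynomial.isUnit_C.mpr
      (isUnit_iff_ne_zero.mpr (inv_ne_zero (Polynomial.leadingCoeff_ne_zero.mpr hg0ne)))
  have hassoc : Associated g0 (g0 * Polynomial.C (g0.leadingCoeff)⁻¹) := by
    refine ⟨hu.unit, ?_⟩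
    rw [IsUnit.unit_spec]
  refine ⟨g0 * Polynomial.C (g0.leadingCoeff)⁻¹,
    ⟨Polynomial.monic_mul_leadingCoeff_inv hg0ne, ?_⟩, ?_⟩
  · rw [hg0']
    exact (Ideal.span_singleton_eq_span_singleton.mpr hassoc)
  · rintro g' ⟨hg'm, hg'sp⟩
    have h1 : Ideal.span {g'} = Ideal.span {g0 * Polynomial.C (g0.leadingCoeff)⁻¹} := by
      rw [← hg'sp, hg0']
      exact Ideal.span_singleton_eq_span_singleton.mpr hassoc
    exact Polynomial.eq_of_monic_of_associated hg'm
      (Polynomial.monic_mul_leadingCoeff_inv hg0ne)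
      (Ideal.span_singleton_eq_span_singleton.mp h1)
theorem stmt6 (K : Type) [Field K] [CharZero K] (I : ZIdeal K) (h : I.Nonzero)
    (L : ∀ n : ℕ, Par n → Ideal (Polynomial K))
    (hL : ∀ n : ℕ, IsDecomp K n (I.carrier n) (L n)) :
    ∀ (n : ℕ) (μ : Par n),
      (∀ f : Polynomial K,
          MonoidAlgebra.single (1 : Equiv.Perm (Fin 0)) f ∈ I.carrier 0 → f ∈ L n μ) ∧
      L n μ ≠ ⊥ ∧
      (∃! g : Polynomial K, g.Monic ∧ L n μ = Ideal.span {g}) ∧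
      (∀ g g0 : Polynomial K, g.Monic → L n μ = Ideal.span {g} → g0.Monic →
        (∀ f : Polynomial K,
          MonoidAlgebra.single (1 : Equiv.Perm (Fin 0)) f ∈ I.carrier 0 ↔ g0 ∣ f) →
        g ∣ g0) := by
  intro n μ
  obtain ⟨f₀, hf₀ne, hf₀⟩ := exists_nonzero_I0 I h
  have k1 : ∀ f : Polynomial K,
      MonoidAlgebra.single (1 : Equiv.Perm (Fin 0)) f ∈ I.carrier 0 → f ∈ L n μ :=
    fun f hf => key1 I n (L n) (hL n) μ f hf
  have hbot : L n μ ≠ ⊥ := by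
    intro hb
    have h1 := k1 f₀ hf₀
    rw [hb] at h1
    exact hf₀ne ((Submodule.mem_bot _).mp h1)
  refine ⟨k1, hbot, exists_unique_monic _ hbot, ?_⟩
  intro g g0 hm hsp hm0 hiff
  have h1 : MonoidAlgebra.single (1 : Equiv.Perm (Fin 0)) g0 ∈ I.carrier 0 :=
    (hiff g0).mpr dvd_rfl
  have h2 := k1 g0 h1
  rw [hsp] at h2
  exact Ideal.mem_span_singleton.mp h2
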